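/- arXiv:0809.4937 — 2 statements merged into one kernel-verified Lean document; each statement's English description precedes it below -/
import Mathlib

section
/- Asymptotic variance formula for a degenerate kernel: if h_g(V₁,V₂) = K_g(X₁−X₂)π(V₁)π(V₂) with V₁, V₂ i.i.d., π(V) = a(ε)m²(X)w(X), E[a(ε)|X] = 0, and K_g(u) = g⁻¹K(u/g), then g·E[h_g(V₁,V₂)²] → E[b²(X)m⁸(X)f(X)w⁴(X)]·∫K²(u)du as g → 0, where b(x) = E[a(ε)²|X=x] under continuity and integrability assumptions. -/
open MeasureTheory Filter
open scoped Convolution Topology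

/-!
The substitution `y = x - g u` turns `g · ∫∫ K_g(x - y)² φ(x) φ(y)`, with `φ = b m⁴ w² f`, into
`∫ K(u)² ψ(g u) du`, where `ψ(t) = ∫ φ(x) φ(x - t) dx` is the autocorrelation of `φ`. As a
convolution of continuous compactly supported functions, `ψ` is continuous and bounded, so
dominated convergence gives the limit `∫ K² · ψ(0) = ∫ K² · ∫ φ²`.
-/

noncomputable def autocorr (φ : ℝ → ℝ) (t : ℝ) : ℝ := ∫ x, φ x * φ (x - t)

lemma autocorr_eq_convolution (φ : ℝ → ℝ) :
    autocorr φ = φ ⋆[ContinuousLinearMap.mul ℝ ℝ] (fun x => φ (-x)) := by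
  ext t
  simp [autocorr, convolution]

lemma continuous_autocorr {φ : ℝ → ℝ} (hφc : Continuous φ) (hφs : HasCompactSupport φ) :
    Continuous (autocorr φ) := by
  rw [autocorr_eq_convolution]
  exact (hφs.comp_homeomorph (Homeomorph.neg ℝ)).continuous_convolution_right _
    (hφc.integrable_of_hasCompactSupport hφs).locallyIntegrable (μ := volume)
    (hφc.comp continuous_neg)

lemma hasCompactSupport_autocorr {φ : ℝ → ℝ} (hφs : HasCompactSupport φ) :
    HasCompactSupport (autocorr φ) := by
  rw [autocorr_eq_convolution]
  exact hφs.convolution _ (hφs.comp_homeomorph (Homeomorph.neg ℝ))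

lemma integral_comp_sub_mul {E : Type*} [NormedAddCommGroup E] [NormedSpace ℝ E]
    (H : ℝ → E) (x g : ℝ) : ∫ u : ℝ, H (x - g * u) = |g⁻¹| • ∫ y : ℝ, H y := by
  rw [Measure.integral_comp_mul_left (fun v => H (x - v)), integral_sub_left_eq_self]

lemma tendsto_integral_mul_comp_mul_nhds_zero {k ψ : ℝ → ℝ} (hk : Integrable k)
    (hψ : Continuous ψ) {C : ℝ} (hC : ∀ t, ‖ψ t‖ ≤ C) :
    Tendsto (fun g => ∫ u, k u * ψ (g * u)) (𝓝 0) (𝓝 (∫ u, k u * ψ 0)) := by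
  refine tendsto_integral_filter_of_dominated_convergence (fun u => ‖k u‖ * C)
    (.of_forall fun g =>
      hk.aestronglyMeasurable.mul (hψ.comp (continuous_const_mul g)).aestronglyMeasurable)
    (.of_forall fun g => .of_forall fun u => ?_) (hk.norm.mul_const C) (.of_forall fun u => ?_)
  · rw [norm_mul]
    exact mul_le_mul_of_nonneg_left (hC _) (norm_nonneg _)
  · have : Tendsto (fun g : ℝ => g * u) (𝓝 0) (𝓝 0) := by
      simpa using (continuous_mul_const u).tendsto 0
    exact (hψ.continuousAt.tendsto.comp this).const_mul _

lemma integrable_sq_mul_autocorr_integrand {K φ : ℝ → ℝ} (hK : Integrable (fun u => K u ^ 2))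
    (hφc : Continuous φ) (hφs : HasCompactSupport φ) (g : ℝ) :
    Integrable (fun p : ℝ × ℝ => K p.2 ^ 2 * (φ p.1 * φ (p.1 - g * p.2))) (volume.prod volume) := by
  obtain ⟨C, hC⟩ := hφc.bounded_above_of_compact_support hφs
  have hshift : Continuous fun p : ℝ × ℝ => φ (p.1 - g * p.2) := by fun_prop
  have h := ((hφc.integrable_of_hasCompactSupport hφs (μ := volume)).mul_prod hK).bdd_mul
    hshift.aestronglyMeasurable (.of_forall fun p => hC (p.1 - g * p.2))
  exact h.congr (.of_forall fun p => by ring)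

lemma mul_integral_integral_sq_rescaled_eq {K φ : ℝ → ℝ} (hK : Integrable (fun u => K u ^ 2))
    (hφc : Continuous φ) (hφs : HasCompactSupport φ) {g : ℝ} (hg : 0 < g) :
    g * ∫ x, ∫ y, ((1 / g) * K ((x - y) / g)) ^ 2 * φ x * φ y
      = ∫ u, K u ^ 2 * autocorr φ (g * u) := by
  have inner (x : ℝ) : g * ∫ y, ((1 / g) * K ((x - y) / g)) ^ 2 * φ x * φ y
      = ∫ u, K u ^ 2 * (φ x * φ (x - g * u)) := by
    have := integral_comp_sub_mul (fun y => ((1 / g) * K ((x - y) / g)) ^ 2 * φ x * φ y) x g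
    simp only [sub_sub_cancel, mul_div_cancel_left₀ _ hg.ne', abs_inv, abs_of_pos hg,
      smul_eq_mul] at this
    rw [eq_inv_mul_iff_mul_eq₀ hg.ne'] at this
    rw [← this, ← mul_assoc, ← integral_const_mul]
    refine integral_congr_ae (.of_forall fun u => ?_)
    field_simp
  calc g * ∫ x, ∫ y, ((1 / g) * K ((x - y) / g)) ^ 2 * φ x * φ y
      = ∫ x, ∫ u, K u ^ 2 * (φ x * φ (x - g * u)) := by
        rw [← integral_const_mul]
        simp only [inner]
    _ = ∫ u, ∫ x, K u ^ 2 * (φ x * φ (x - g * u)) :=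
        integral_integral_swap (integrable_sq_mul_autocorr_integrand hK hφc hφs g)
    _ = ∫ u, K u ^ 2 * autocorr φ (g * u) := by
        simp only [integral_const_mul, autocorr]

theorem degenerate_kernel_variance_limit_general
    (K f b m w : ℝ → ℝ)
    (hf : Continuous f) (hb : Continuous b)
    (hm : Continuous m) (hw : Continuous w) (hws : HasCompactSupport w)
    (hK : Measurable K) (hKb : ∃ C, ∀ x, |K x| ≤ C) (hKs : HasCompactSupport K) :
    Tendsto (fun g : ℝ => g * ∫ x : ℝ, ∫ y : ℝ,
        ((1 / g) * K ((x - y) / g))^2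
          * (b x * (m x)^4 * (w x)^2 * f x) * (b y * (m y)^4 * (w y)^2 * f y))
      (nhdsWithin 0 (Set.Ioi 0))
      (nhds ((∫ u : ℝ, (K u)^2) * ∫ x : ℝ, (b x)^2 * (m x)^8 * (w x)^4 * (f x)^2)) := by
  obtain ⟨CK, hCK⟩ := hKb
  set φ : ℝ → ℝ := fun x => b x * m x ^ 4 * w x ^ 2 * f x
  have hφc : Continuous φ := by fun_prop
  have hφs : HasCompactSupport φ := hws.mono fun x hx hwx => hx (by simp [φ, hwx])
  have hK2 : Integrable (fun u => K u ^ 2) :=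
    (hKs.memLp_of_bound (p := 2) hK.aestronglyMeasurable CK (.of_forall hCK)).integrable_sq
  obtain ⟨C, hC⟩ := (continuous_autocorr hφc hφs).bounded_above_of_compact_support
    (hasCompactSupport_autocorr hφs)
  have hψ0 : autocorr φ 0 = ∫ x, b x ^ 2 * m x ^ 8 * w x ^ 4 * f x ^ 2 := by
    simp only [autocorr, sub_zero]
    exact integral_congr_ae (.of_forall fun x => by ring)
  rw [← hψ0, ← integral_mul_const]
  refine ((tendsto_integral_mul_comp_mul_nhds_zero hK2 (continuous_autocorr hφc hφs) hC).mono_left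
    nhdsWithin_le_nhds).congr' ?_
  filter_upwards [self_mem_nhdsWithin] with g hg
  exact (mul_integral_integral_sq_rescaled_eq hK2 hφc hφs hg).symm

/-- Asymptotic variance formula for a degenerate kernel. With `X₁, X₂` i.i.d. with
density `f`, `b(x) = E[a(ε)²|X=x]`, the limit
`g·E[K_g(X₁−X₂)² b(X₁)m⁴(X₁)w²(X₁) b(X₂)m⁴(X₂)w²(X₂)] → (∫K²)·E[b²(X)m⁸(X)f(X)w⁴(X)]`
as `g → 0⁺`, written as an integral against the density `f`. -/
theorem degenerate_kernel_variance_limit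
    (K f b m w : ℝ → ℝ)
    (hf : Continuous f) (hfb : ∃ C, ∀ x, |f x| ≤ C) (hf0 : ∀ x, 0 ≤ f x)
    (hb : Continuous b) (hbb : ∃ C, ∀ x, |b x| ≤ C)
    (hm : Continuous m) (hw : Continuous w) (hws : HasCompactSupport w)
    (hK : Measurable K) (hKb : ∃ C, ∀ x, |K x| ≤ C) (hKs : HasCompactSupport K) :
    Tendsto (fun g : ℝ => g * ∫ x : ℝ, ∫ y : ℝ,
        ((1 / g) * K ((x - y) / g))^2
          * (b x * (m x)^4 * (w x)^2 * f x) * (b y * (m y)^4 * (w y)^2 * f y))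
      (nhdsWithin 0 (Set.Ioi 0))
      (nhds ((∫ u : ℝ, (K u)^2) * ∫ x : ℝ, (b x)^2 * (m x)^8 * (w x)^4 * (f x)^2)) :=
  degenerate_kernel_variance_limit_general K f b m w hf hb hm hw hws hK hKb hKs
end

section
/- Triple kernel convolution limit: for continuous compactly supported φ and kernels K (bounded, compactly supported, ∫K=1), h·∫∫∫ K_g(x−y) K_h(z−x) K_h(z−y) φ(x,y,z) dx dy dz → (∫K²(u)du)·∫ φ(x,x,x) dx as h → 0 and g/h → 0, where K_h(u) = h⁻¹K(u/h). -/
open MeasureTheory Filter Topology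

/-!
Substituting `y = x - g u`, `z = x + h w` turns `h · ∫∫∫ K_g(x-y) K_h(z-x) K_h(z-y) φ` into
`∫∫∫ K(u) K(w) K(w + (g/h) u) φ(x, x - g u, x + h w) dx du dw`. This integrand tends pointwise to
`K(u) K(w)² φ(x, x, x)` and is dominated by `C · 1_S(x) |K(u)| |K(w)|`, where `S` is the projection
of `supp φ` on the first coordinate, so dominated convergence gives `(∫ K) (∫ K²) ∫ φ(x, x, x)`.
-/

section ChangeOfVariables

variable {F : Type*} [NormedAddCommGroup F] [NormedSpace ℝ F]

theorem integral_comp_add_mul (f : ℝ → F) (x b : ℝ) :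
    ∫ w : ℝ, f (x + b * w) = |b⁻¹| • ∫ z : ℝ, f z := by
  rw [Measure.integral_comp_mul_left (fun t => f (x + t)) b, integral_add_left_eq_self]

theorem integral_comp_sub_mul_s15 (f : ℝ → F) (x b : ℝ) :
    ∫ w : ℝ, f (x - b * w) = |b⁻¹| • ∫ z : ℝ, f z := by
  simpa [neg_mul, ← sub_eq_add_neg] using integral_comp_add_mul f x (-b)

end ChangeOfVariables

theorem integral_integral_integral_eq_integral_prod {α β γ E : Type*} [MeasurableSpace α]
    [MeasurableSpace β] [MeasurableSpace γ] [NormedAddCommGroup E] [NormedSpace ℝ E]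
    {μ : Measure α} {ν : Measure β} {ρ : Measure γ} [SFinite μ] [SFinite ν] [SFinite ρ]
    {f : α × β × γ → E} (hf : Integrable f (μ.prod (ν.prod ρ))) :
    ∫ x, ∫ y, ∫ z, f (x, y, z) ∂ρ ∂ν ∂μ = ∫ p, f p ∂(μ.prod (ν.prod ρ)) := by
  rw [integral_prod _ hf]
  refine integral_congr_ae ?_
  filter_upwards [hf.prod_right_ae] with x hx
  exact (integral_prod _ hx).symm

/-- The integrand after the substitution `y = x - a u`, `z = x + b w`; the ratio `c` stands for
`a / b`, kept as a separate parameter so that the limit `a, b, c → 0` is mere continuity. -/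
def rescaledIntegrand (K : ℝ → ℝ) (φ : ℝ × ℝ × ℝ → ℝ) (a b c : ℝ) (p : ℝ × ℝ × ℝ) : ℝ :=
  K p.2.1 * K p.2.2 * K (p.2.2 + c * p.2.1) * φ (p.1, p.1 - a * p.2.1, p.1 + b * p.2.2)

theorem mul_integral_kernel_triple_eq (K : ℝ → ℝ) (φ : ℝ × ℝ × ℝ → ℝ) {a b : ℝ}
    (ha : 0 < a) (hb : 0 < b) :
    b * ∫ x : ℝ, ∫ y : ℝ, ∫ z : ℝ,
        ((1 / a) * K ((x - y) / a)) * ((1 / b) * K ((z - x) / b))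
          * ((1 / b) * K ((z - y) / b)) * φ (x, y, z)
      = ∫ x : ℝ, ∫ u : ℝ, ∫ w : ℝ, rescaledIntegrand K φ a b (a / b) (x, u, w) := by
  have subst {s : ℝ} (hs : 0 < s) (f : ℝ → ℝ) (x : ℝ) :
      (∫ z, f z = s * ∫ w, f (x + s * w)) ∧ ∫ y, f y = s * ∫ u, f (x - s * u) := by
    rw [integral_comp_add_mul, integral_comp_sub_mul_s15, smul_eq_mul, abs_of_pos (inv_pos.2 hs),
      mul_inv_cancel_left₀ hs.ne']
    exact ⟨rfl, rfl⟩
  rw [← integral_const_mul]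
  congr 1; funext x
  have hz : ∀ y, ∫ z : ℝ, ((1 / a) * K ((x - y) / a)) * ((1 / b) * K ((z - x) / b))
        * ((1 / b) * K ((z - y) / b)) * φ (x, y, z)
      = b * ∫ w : ℝ, ((1 / a) * K ((x - y) / a)) * ((1 / b) * K ((x + b * w - x) / b))
        * ((1 / b) * K ((x + b * w - y) / b)) * φ (x, y, x + b * w) :=
    fun y => (subst hb _ x).1
  simp_rw [hz]
  rw [(subst ha _ x).2]
  simp only [← integral_const_mul]
  congr 1; funext u
  congr 1; funext w
  have e₁ : (x - (x - a * u)) / a = u := by field_simp; ring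
  have e₂ : (x + b * w - x) / b = w := by field_simp; ring
  have e₃ : (x + b * w - (x - a * u)) / b = w + a / b * u := by field_simp; ring
  rw [e₁, e₂, e₃, rescaledIntegrand]
  field_simp

section Limit

variable {K : ℝ → ℝ} {φ : ℝ × ℝ × ℝ → ℝ}

theorem exists_integrable_bound_rescaledIntegrand (hK : Continuous K) (hKs : HasCompactSupport K)
    (hφ : Continuous φ) (hφs : HasCompactSupport φ) :
    ∃ D : ℝ × ℝ × ℝ → ℝ, Integrable D (volume.prod (volume.prod volume)) ∧
      ∀ a b c p, ‖rescaledIntegrand K φ a b c p‖ ≤ D p := by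
  obtain ⟨MK, hMK⟩ := hK.bounded_above_of_compact_support hKs
  obtain ⟨Mφ, hMφ⟩ := hφ.bounded_above_of_compact_support hφs
  set S : Set ℝ := Prod.fst '' tsupport φ
  have hS : IsCompact S := hφs.image continuous_fst
  -- `φ (x, y, z) ≠ 0` forces `x ∈ S`, whatever `a`, `b` are in `y = x - a u`, `z = x + b w`.
  have hφS : ∀ q, ‖φ q‖ ≤ S.indicator (fun _ => Mφ) q.1 := by
    intro q
    by_cases hq : φ q = 0
    · simpa [hq] using Set.indicator_nonneg (fun _ _ => (norm_nonneg _).trans (hMφ q)) _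
    · rw [Set.indicator_of_mem (Set.mem_image_of_mem Prod.fst (subset_tsupport φ hq))]
      exact hMφ q
  have hKn : Integrable fun u => ‖K u‖ := (hK.integrable_of_hasCompactSupport hKs).norm
  refine ⟨fun p => MK * S.indicator (fun _ => Mφ) p.1 * (‖K p.2.1‖ * ‖K p.2.2‖),
    ((integrable_indicator_iff hS.measurableSet).2
      (integrableOn_const hS.measure_lt_top.ne)).const_mul MK |>.mul_prod (hKn.mul_prod hKn),
    fun a b c p => ?_⟩
  calc ‖rescaledIntegrand K φ a b c p‖
      = ‖K p.2.1‖ * ‖K p.2.2‖ * (‖K (p.2.2 + c * p.2.1)‖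
          * ‖φ (p.1, p.1 - a * p.2.1, p.1 + b * p.2.2)‖) := by
        simp only [rescaledIntegrand, norm_mul, mul_assoc]
    _ ≤ ‖K p.2.1‖ * ‖K p.2.2‖ * (MK * S.indicator (fun _ => Mφ) p.1) := by
        gcongr
        · exact (norm_nonneg _).trans (hMK 0)
        · exact hMK _
        · exact hφS _
    _ = MK * S.indicator (fun _ => Mφ) p.1 * (‖K p.2.1‖ * ‖K p.2.2‖) := by ring

theorem integrable_rescaledIntegrand (hK : Continuous K) (hKs : HasCompactSupport K)
    (hφ : Continuous φ) (hφs : HasCompactSupport φ) (a b c : ℝ) :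
    Integrable (rescaledIntegrand K φ a b c) (volume.prod (volume.prod volume)) := by
  obtain ⟨D, hD, hbound⟩ := exists_integrable_bound_rescaledIntegrand hK hKs hφ hφs
  exact hD.mono' (by unfold rescaledIntegrand; fun_prop) (ae_of_all _ (hbound a b c))

theorem tendsto_integral_rescaledIntegrand (hK : Continuous K) (hKs : HasCompactSupport K)
    (hφ : Continuous φ) (hφs : HasCompactSupport φ) {ι : Type*} {l : Filter ι}
    [l.IsCountablyGenerated] {a b c : ι → ℝ} (ha : Tendsto a l (𝓝 0))
    (hb : Tendsto b l (𝓝 0)) (hc : Tendsto c l (𝓝 0)) :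
    Tendsto (fun i => ∫ p, rescaledIntegrand K φ (a i) (b i) (c i) p
        ∂(volume.prod (volume.prod volume)))
      l (𝓝 (∫ p, rescaledIntegrand K φ 0 0 0 p ∂(volume.prod (volume.prod volume)))) := by
  obtain ⟨D, hD, hbound⟩ := exists_integrable_bound_rescaledIntegrand hK hKs hφ hφs
  refine tendsto_integral_filter_of_dominated_convergence D
    (Eventually.of_forall fun i => (by unfold rescaledIntegrand; fun_prop))
    (Eventually.of_forall fun i => ae_of_all _ (hbound _ _ _)) hD (ae_of_all _ fun p => ?_)
  have hcont : Continuous fun q : ℝ × ℝ × ℝ => rescaledIntegrand K φ q.1 q.2.1 q.2.2 p := by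
    unfold rescaledIntegrand; fun_prop
  exact (hcont.tendsto (0, 0, 0)).comp (ha.prodMk_nhds (hb.prodMk_nhds hc))

end Limit

theorem integral_rescaledIntegrand_zero (K : ℝ → ℝ) (φ : ℝ × ℝ × ℝ → ℝ) :
    ∫ p, rescaledIntegrand K φ 0 0 0 p ∂(volume.prod (volume.prod volume))
      = (∫ u : ℝ, K u) * (∫ w : ℝ, K w ^ 2) * ∫ x : ℝ, φ (x, x, x) := by
  have hsplit : rescaledIntegrand K φ 0 0 0
      = fun p => φ (p.1, p.1, p.1) * (K p.2.1 * K p.2.2 ^ 2) := by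
    funext p; simp only [rescaledIntegrand]; ring_nf
  rw [hsplit, integral_prod_mul (fun x : ℝ => φ (x, x, x)) (fun q : ℝ × ℝ => K q.1 * K q.2 ^ 2),
    integral_prod_mul K (fun w : ℝ => K w ^ 2), mul_comm]

/-- Triple kernel convolution limit:
`h·∫∫∫ K_g(x−y) K_h(z−x) K_h(z−y) φ(x,y,z) dx dy dz → (∫K²)·∫ φ(x,x,x) dx`
as `h → 0` and `g/h → 0`, where `K_h(u) = h⁻¹K(u/h)`. -/
theorem triple_kernel_convolution_limit
    (K : ℝ → ℝ) (φ : ℝ × ℝ × ℝ → ℝ) (L : NNReal)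
    (hK : LipschitzWith L K) (hKs : HasCompactSupport K) (hK1 : ∫ u : ℝ, K u = 1)
    (hφ : Continuous φ) (hφs : HasCompactSupport φ)
    (g h : ℕ → ℝ) (hgpos : ∀ n, 0 < g n) (hhpos : ∀ n, 0 < h n)
    (hh0 : Tendsto h atTop (nhds 0))
    (hgh : Tendsto (fun n => g n / h n) atTop (nhds 0)) :
    Tendsto (fun n => h n * ∫ x : ℝ, ∫ y : ℝ, ∫ z : ℝ,
        ((1 / g n) * K ((x - y) / g n)) * ((1 / h n) * K ((z - x) / h n))
          * ((1 / h n) * K ((z - y) / h n)) * φ (x, y, z))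
      atTop (nhds ((∫ u : ℝ, (K u)^2) * ∫ x : ℝ, φ (x, x, x))) := by
  have hg0 : Tendsto g atTop (𝓝 0) := by
    simpa using (hgh.mul hh0).congr fun n => div_mul_cancel₀ (g n) (hhpos n).ne'
  have hlim := tendsto_integral_rescaledIntegrand hK.continuous hKs hφ hφs hg0 hh0 hgh
  rw [integral_rescaledIntegrand_zero, hK1, one_mul] at hlim
  refine hlim.congr fun n => ?_
  rw [mul_integral_kernel_triple_eq K φ (hgpos n) (hhpos n),
    integral_integral_integral_eq_integral_prod
      (integrable_rescaledIntegrand hK.continuous hKs hφ hφs _ _ _)]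
end
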